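/- Let n ≥ 1 be an integer, α ∈ (0,1), η > 0, and T ≥ 1. Let p⁰ ∈ A_α, let û⁰,…,û^{T−1} ∈ ℝ^n satisfy û^t_i ≤ 0 for all t and i, and for t = 0,…,T−1 let p^{t+1} be a minimizer of q ↦ −η·⟨q, û^t⟩ + D(q‖p^t) over A_α. Then for every p ∈ A_α, Σ_{t=0}^{T−1} ⟨p − p^t, û^t⟩ ≤ log(n/α)/η + (η/2)·Σ_{t=0}^{T−1} Σ_{i=1}^n p^t_i·(û^t_i)². -/

import Mathlib

/-!
Each step of entropic mirror descent is the Bregman projection onto the convex set of the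
exponentially tilted point `w i = pᵗ i * exp (η * uᵗ i)`. The three-point identity and the
first-order optimality condition of the projection give the Pythagorean inequality
`D(p‖pᵗ⁺¹) + D(pᵗ⁺¹‖w) ≤ D(p‖w)`, and `exp x ≤ 1 + x + x² / 2` for `x ≤ 0` bounds the mass
`∑ i, (w i - pᵗ i)`, so `η ⟨p - pᵗ, uᵗ⟩ ≤ D(p‖pᵗ) - D(p‖pᵗ⁺¹) + η² / 2 ∑ i, pᵗ i (uᵗ i)²`.
The sum over `t` telescopes, and on the clipped simplex `D(p‖p⁰) ≤ log (n / α)` because every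
ratio `p i / p⁰ i` is at most `n / α`.
-/

open Finset

/-- Unnormalized negative-entropy Bregman divergence
`D(x‖y) = ∑ i, (x i * log (x i / y i) - x i + y i)` (with `0·log 0 = 0`,
which holds automatically since `Real.log 0 = 0`). -/
noncomputable def breg {n : ℕ} (x y : Fin n → ℝ) : ℝ :=
  ∑ i, (x i * Real.log (x i / y i) - x i + y i)

/-- The clipped simplex `A_α = {x : ∑ i, x i = 1 ∧ ∀ i, x i ≥ α / n}`. -/
def clippedSimplex (n : ℕ) (α : ℝ) : Set (Fin n → ℝ) :=
  {x | (∑ i, x i) = 1 ∧ ∀ i, α / n ≤ x i}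

open Real InformationTheory

theorem Real.exp_le_quadratic_of_nonpos {x : ℝ} (hx : x ≤ 0) : exp x ≤ 1 + x + x ^ 2 / 2 := by
  let g : ℝ → ℝ := fun t => exp t - (1 + t + t ^ 2 / 2)
  have hg : ∀ t, HasDerivAt g (exp t - (1 + t)) t := fun t =>
    ((hasDerivAt_exp t).sub (((hasDerivAt_id' t).const_add 1).add
      ((hasDerivAt_pow 2 t).div_const 2))).congr_deriv (by ring)
  have hmono : Monotone g := monotone_of_deriv_nonneg (fun t => (hg t).differentiableAt)
    fun t => by rw [(hg t).deriv]; linarith [add_one_le_exp t]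
  simpa [g] using hmono hx

section

variable {n : ℕ}

theorem breg_nonneg {x y : Fin n → ℝ} (hx : ∀ i, 0 ≤ x i) (hy : ∀ i, 0 < y i) :
    0 ≤ breg x y := by
  refine sum_nonneg fun i _ => ?_
  have hklFun : x i * log (x i / y i) - x i + y i = y i * klFun (x i / y i) := by
    have := (hy i).ne'
    rw [klFun]
    field_simp
    ring
  rw [hklFun]
  exact mul_nonneg (hy i).le (klFun_nonneg (div_nonneg (hx i) (hy i).le))

theorem breg_mul_exp (x : Fin n → ℝ) {y : Fin n → ℝ} (hy : ∀ i, y i ≠ 0) (g : Fin n → ℝ) :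
    breg x (fun i => y i * exp (g i)) =
      breg x y - ∑ i, x i * g i + ∑ i, (y i * exp (g i) - y i) := by
  simp only [breg, ← sum_sub_distrib, ← sum_add_distrib]
  refine sum_congr rfl fun i _ => ?_
  rcases eq_or_ne (x i) 0 with hx | hx
  · simp [hx]
  · rw [log_div hx (mul_ne_zero (hy i) (exp_ne_zero _)), log_mul (hy i) (exp_ne_zero _),
      log_exp, log_div hx (hy i)]
    ring

theorem hasFDerivAt_breg_left {c w : Fin n → ℝ} (hc : ∀ i, c i ≠ 0) (hw : ∀ i, w i ≠ 0) :
    HasFDerivAt (fun x => breg x w)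
      (∑ i, log (c i / w i) • ContinuousLinearMap.proj (R := ℝ) (φ := fun _ : Fin n => ℝ) i)
      c := by
  refine HasFDerivAt.fun_sum fun i _ => ?_
  have hterm : HasDerivAt (fun s => s * log (s / w i) - s + w i) (log (c i / w i)) (c i) := by
    have hlog := ((hasDerivAt_id' (c i)).div_const (w i)).log (div_ne_zero (hc i) (hw i))
    refine ((((hasDerivAt_id' (c i)).mul hlog).sub (hasDerivAt_id' (c i))).add_const
      (w i)).congr_deriv ?_
    field_simp [hc i, hw i]
    ring
  exact hterm.comp_hasFDerivAt c (hasFDerivAt_apply (𝕜 := ℝ) (F' := fun _ : Fin n => ℝ) i c)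

theorem breg_sub_breg_sub_breg (x : Fin n → ℝ) {y z : Fin n → ℝ} (hy : ∀ i, y i ≠ 0)
    (hz : ∀ i, z i ≠ 0) :
    breg x z - breg x y - breg y z = ∑ i, (x i - y i) * log (y i / z i) := by
  simp only [breg, ← sum_sub_distrib]
  refine sum_congr rfl fun i _ => ?_
  rcases eq_or_ne (x i) 0 with hx | hx
  · simp [hx]; ring
  · rw [log_div hx (hz i), log_div hx (hy i), log_div (hy i) (hz i)]
    ring

theorem breg_add_breg_le_of_isMinOn {s : Set (Fin n → ℝ)} (hs : Convex ℝ s) {c w x : Fin n → ℝ}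
    (hc : c ∈ s) (hx : x ∈ s) (hc0 : ∀ i, c i ≠ 0) (hw0 : ∀ i, w i ≠ 0)
    (hmin : IsMinOn (fun q => breg q w) s c) :
    breg x c + breg c w ≤ breg x w := by
  have hfirst := hmin.localize.hasFDerivWithinAt_nonneg
    (hasFDerivAt_breg_left hc0 hw0).hasFDerivWithinAt
    (sub_mem_posTangentConeAt_of_segment_subset (hs.segment_subset hc hx))
  simp only [FunLike.coe_sum, Finset.sum_apply, FunLike.coe_smul, Pi.smul_apply,
    ContinuousLinearMap.proj_apply, Pi.sub_apply, smul_eq_mul] at hfirst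
  linarith [breg_sub_breg_sub_breg x hc0 hw0, show ∑ i, (x i - c i) * log (c i / w i) =
    ∑ i, log (c i / w i) * (x i - c i) from sum_congr rfl fun i _ => mul_comm _ _]

theorem sum_mul_exp_sub_le {y u : Fin n → ℝ} (hy : ∀ i, 0 ≤ y i) (hu : ∀ i, u i ≤ 0)
    {η : ℝ} (hη : 0 ≤ η) :
    ∑ i, (y i * exp (η * u i) - y i) ≤
      η * ∑ i, y i * u i + η ^ 2 / 2 * ∑ i, y i * u i ^ 2 := by
  rw [mul_sum, mul_sum, ← sum_add_distrib]
  refine sum_le_sum fun i _ => ?_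
  have := mul_le_mul_of_nonneg_left
    (exp_le_quadratic_of_nonpos (mul_nonpos_of_nonneg_of_nonpos hη (hu i))) (hy i)
  linarith

theorem mirrorDescent_step_le {s : Set (Fin n → ℝ)} (hs : Convex ℝ s)
    (hpos : ∀ q ∈ s, ∀ i, 0 < q i) {η : ℝ} (hη : 0 ≤ η) {u y c x : Fin n → ℝ}
    (hu : ∀ i, u i ≤ 0) (hy : ∀ i, 0 < y i) (hc : c ∈ s)
    (hmin : IsMinOn (fun q => -η * ∑ i, q i * u i + breg q y) s c) (hx : x ∈ s) :
    η * ∑ i, (x i - y i) * u i ≤ breg x y - breg x c + η ^ 2 / 2 * ∑ i, y i * u i ^ 2 := by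
  set w : Fin n → ℝ := fun i => y i * exp (η * u i)
  have hw : ∀ i, 0 < w i := fun i => mul_pos (hy i) (exp_pos _)
  have htilt (q : Fin n → ℝ) :
      breg q w = -η * ∑ i, q i * u i + breg q y + ∑ i, (w i - y i) := by
    rw [breg_mul_exp q (fun i => (hy i).ne'), neg_mul, mul_sum]
    simp only [w, mul_left_comm _ η]
    ring
  have hproj : IsMinOn (fun q => breg q w) s c := isMinOn_iff.2 fun q hq => by
    simp only [htilt]
    linarith [isMinOn_iff.1 hmin q hq]
  have hpyth := breg_add_breg_le_of_isMinOn hs hc hx (fun i => (hpos c hc i).ne')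
    (fun i => (hw i).ne') hproj
  have hcw := breg_nonneg (fun i => (hpos c hc i).le) hw
  have hexp := sum_mul_exp_sub_le (fun i => (hy i).le) hu hη
  have hsplit : ∑ i, (x i - y i) * u i = ∑ i, x i * u i - ∑ i, y i * u i := by
    rw [← sum_sub_distrib]
    exact sum_congr rfl fun i _ => sub_mul _ _ _
  rw [htilt x] at hpyth
  rw [hsplit, mul_sub]
  linarith

theorem mirrorDescent_regret_le {s : Set (Fin n → ℝ)} (hs : Convex ℝ s)
    (hpos : ∀ q ∈ s, ∀ i, 0 < q i) {η : ℝ} (hη : 0 < η) {T : ℕ} {p u : ℕ → Fin n → ℝ}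
    (hp0 : ∀ i, 0 < p 0 i) (hu : ∀ t i, u t i ≤ 0)
    (hmin : ∀ t < T, p (t + 1) ∈ s ∧
      IsMinOn (fun q => -η * ∑ i, q i * u t i + breg q (p t)) s (p (t + 1)))
    {x : Fin n → ℝ} (hx : x ∈ s) :
    ∑ t ∈ range T, ∑ i, (x i - p t i) * u t i ≤
      breg x (p 0) / η + η / 2 * ∑ t ∈ range T, ∑ i, p t i * u t i ^ 2 := by
  have hp : ∀ t ≤ T, ∀ i, 0 < p t i
    | 0, _ => hp0
    | t + 1, ht => hpos _ (hmin t ht).1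
  have hstep : ∀ t ∈ range T, η * ∑ i, (x i - p t i) * u t i ≤
      breg x (p t) - breg x (p (t + 1)) + η ^ 2 / 2 * ∑ i, p t i * u t i ^ 2 := fun t ht => by
    have ht := mem_range.1 ht
    exact mirrorDescent_step_le hs hpos hη.le (hu t) (hp t ht.le) (hmin t ht).1 (hmin t ht).2 hx
  have hsum := sum_le_sum hstep
  rw [← mul_sum, sum_add_distrib, sum_range_sub', ← mul_sum] at hsum
  have hlast := breg_nonneg (fun i => (hpos x hx i).le) (hp T le_rfl)
  rw [div_add' _ _ _ hη.ne', le_div_iff₀ hη]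
  linarith

variable {α : ℝ}

theorem pos_of_mem_clippedSimplex (hα : 0 < α) {x : Fin n → ℝ} (hx : x ∈ clippedSimplex n α)
    (i : Fin n) : 0 < x i :=
  (div_pos hα (Nat.cast_pos.2 i.pos)).trans_le (hx.2 i)

theorem convex_clippedSimplex : Convex ℝ (clippedSimplex n α) := by
  intro x hx y hy a b ha hb hab
  refine ⟨?_, fun i => ?_⟩
  · simp [sum_add_distrib, ← mul_sum, hx.1, hy.1, hab]
  · have hsplit : α / n = a * (α / n) + b * (α / n) := by rw [← add_mul, hab, one_mul]
    simp only [Pi.add_apply, Pi.smul_apply, smul_eq_mul]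
    linarith [mul_le_mul_of_nonneg_left (hx.2 i) ha, mul_le_mul_of_nonneg_left (hy.2 i) hb]

theorem breg_le_log_of_mem_clippedSimplex (hα : 0 < α) {x y : Fin n → ℝ}
    (hx : x ∈ clippedSimplex n α) (hy : y ∈ clippedSimplex n α) :
    breg x y ≤ log (n / α) := by
  have hx0 := pos_of_mem_clippedSimplex hα hx
  have hy0 := pos_of_mem_clippedSimplex hα hy
  have hratio (i : Fin n) : x i / y i ≤ n / α := by
    have hx1 : x i ≤ 1 := hx.1 ▸ single_le_sum (fun j _ => (hx0 j).le) (mem_univ i)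
    have := div_le_div₀ zero_le_one hx1 (div_pos hα (Nat.cast_pos.2 i.pos)) (hy.2 i)
    rwa [one_div_div] at this
  calc breg x y = ∑ i, x i * log (x i / y i) := by
        simp only [breg, sum_add_distrib, sum_sub_distrib, hx.1, hy.1, sub_add_cancel]
    _ ≤ ∑ i, x i * log (n / α) := sum_le_sum fun i _ =>
        mul_le_mul_of_nonneg_left (log_le_log (div_pos (hx0 i) (hy0 i)) (hratio i)) (hx0 i).le
    _ = log (n / α) := by rw [← sum_mul, hx.1, one_mul]

end

theorem stmt_11_general (n : ℕ) (α η : ℝ) (hα : 0 < α ∧ α < 1) (hη : 0 < η)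
    (T : ℕ)
    (p : ℕ → Fin n → ℝ) (hp0 : p 0 ∈ clippedSimplex n α)
    (u : ℕ → Fin n → ℝ) (hu : ∀ t i, u t i ≤ 0)
    (hmin : ∀ t < T, p (t + 1) ∈ clippedSimplex n α ∧
      ∀ q ∈ clippedSimplex n α,
        -η * (∑ i, p (t + 1) i * u t i) + breg (p (t + 1)) (p t) ≤
          -η * (∑ i, q i * u t i) + breg q (p t)) :
    ∀ pp ∈ clippedSimplex n α,
      ∑ t ∈ Finset.range T, ∑ i, (pp i - p t i) * u t i ≤
        Real.log (n / α) / η + η / 2 * ∑ t ∈ Finset.range T, ∑ i, p t i * u t i ^ 2 := by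
  intro pp hpp
  calc _ ≤ breg pp (p 0) / η + η / 2 * ∑ t ∈ range T, ∑ i, p t i * u t i ^ 2 :=
        mirrorDescent_regret_le convex_clippedSimplex
          (fun _ => pos_of_mem_clippedSimplex hα.1) hη (pos_of_mem_clippedSimplex hα.1 hp0) hu
          (fun t ht => ⟨(hmin t ht).1, isMinOn_iff.2 (hmin t ht).2⟩) hpp
    _ ≤ _ := by
        gcongr
        exact breg_le_log_of_mem_clippedSimplex hα.1 hpp hp0

theorem stmt_11 (n : ℕ) (hn : 1 ≤ n) (α η : ℝ) (hα : 0 < α ∧ α < 1) (hη : 0 < η)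
    (T : ℕ) (hT : 1 ≤ T)
    (p : ℕ → Fin n → ℝ) (hp0 : p 0 ∈ clippedSimplex n α)
    (u : ℕ → Fin n → ℝ) (hu : ∀ t i, u t i ≤ 0)
    (hmin : ∀ t < T, p (t + 1) ∈ clippedSimplex n α ∧
      ∀ q ∈ clippedSimplex n α,
        -η * (∑ i, p (t + 1) i * u t i) + breg (p (t + 1)) (p t) ≤
          -η * (∑ i, q i * u t i) + breg q (p t)) :
    ∀ pp ∈ clippedSimplex n α,
      ∑ t ∈ Finset.range T, ∑ i, (pp i - p t i) * u t i ≤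
        Real.log (n / α) / η + η / 2 * ∑ t ∈ Finset.range T, ∑ i, p t i * u t i ^ 2 :=
  stmt_11_general n α η hα hη T p hp0 u hu hmin
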